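/- arXiv:2011.01633 — 3 statements merged into one kernel-verified Lean document; each statement's English description precedes it below -/
import Mathlib

section
/- Let κ : ℝ → ℝ be a smooth, positive, L-periodic function satisfying κ'' − (κ')²/κ + κ³ = κ/2, and let c > 0. Then −c ∫_0^L (κ⁵ − 3κ(κ')²) dσ = −(c/2) ∫_0^L κ³ dσ, and in particular this quantity is strictly negative. -/
open intervalIntegral
open scoped ContDiff

/-- Sign of `B₁` for Abresch-Langer curves: if `κ` is a smooth positive `L`-periodic
solution of `κ'' - (κ')²/κ + κ³ = κ/2` and `c > 0`, then
`-c ∫ (κ⁵ - 3κ(κ')²) = -(c/2) ∫ κ³`, and this quantity is strictly negative. -/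
theorem stmt_4 (κ : ℝ → ℝ) (L : ℝ) (hL : 0 < L) (c : ℝ) (hc : 0 < c)
    (hκ : ContDiff ℝ (⊤ : ℕ∞) κ) (hpos : ∀ σ, 0 < κ σ) (hper : Function.Periodic κ L)
    (hode : ∀ σ, deriv (deriv κ) σ - (deriv κ σ) ^ 2 / κ σ + κ σ ^ 3 = κ σ / 2) :
    (-c * (∫ σ in (0:ℝ)..L, (κ σ ^ 5 - 3 * κ σ * deriv κ σ ^ 2)) =
      -(c / 2) * ∫ σ in (0:ℝ)..L, κ σ ^ 3) ∧
    -c * (∫ σ in (0:ℝ)..L, (κ σ ^ 5 - 3 * κ σ * deriv κ σ ^ 2)) < 0 := by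
  have hinf : ContDiff ℝ ∞ κ := hκ.of_le (by simp)
  have hκ' : ContDiff ℝ ∞ (deriv κ) := (contDiff_infty_iff_deriv.mp hinf).2
  have hcκ : Continuous κ := hκ.continuous
  have hcκ' : Continuous (deriv κ) := hκ'.continuous
  -- derivative of g = κ² κ'
  have hderiv : ∀ σ, HasDerivAt (fun σ => κ σ ^ 2 * deriv κ σ)
      (3 * κ σ * deriv κ σ ^ 2 + κ σ ^ 3 / 2 - κ σ ^ 5) σ := by
    intro σ
    have h1 : HasDerivAt κ (deriv κ σ) σ := (hκ.differentiable (by simp) σ).hasDerivAt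
    have h2 : HasDerivAt (deriv κ) (deriv (deriv κ) σ) σ :=
      (hκ'.differentiable (by simp) σ).hasDerivAt
    have h : HasDerivAt (fun σ => κ σ ^ 2 * deriv κ σ)
        (((2:ℕ):ℝ) * κ σ ^ (2 - 1) * deriv κ σ * deriv κ σ + κ σ ^ 2 * deriv (deriv κ) σ) σ :=
      (h1.pow 2).mul h2
    convert h using 1
    have hne : κ σ ≠ 0 := (hpos σ).ne'
    have hode' : deriv (deriv κ) σ = κ σ / 2 - κ σ ^ 3 + (deriv κ σ) ^ 2 / κ σ := by
      have := hode σ; linarith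
    rw [hode']
    norm_num
    field_simp
    ring
  have hint3 : ∀ σ, 3 * κ σ * deriv κ σ ^ 2 + κ σ ^ 3 / 2 - κ σ ^ 5 =
      -(κ σ ^ 5 - 3 * κ σ * deriv κ σ ^ 2) + κ σ ^ 3 / 2 := by intro σ; ring
  have hcont : Continuous (fun σ => 3 * κ σ * deriv κ σ ^ 2 + κ σ ^ 3 / 2 - κ σ ^ 5) := by
    continuity
  have hint : (∫ σ in (0:ℝ)..L, (3 * κ σ * deriv κ σ ^ 2 + κ σ ^ 3 / 2 - κ σ ^ 5)) =
      κ L ^ 2 * deriv κ L - κ 0 ^ 2 * deriv κ 0 := by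
    exact intervalIntegral.integral_eq_sub_of_hasDerivAt (fun σ _ => hderiv σ)
      (hcont.intervalIntegrable 0 L)
  have hperg : κ L ^ 2 * deriv κ L - κ 0 ^ 2 * deriv κ 0 = 0 := by
    have h1 : κ L = κ 0 := by simpa using hper 0
    have h2 : deriv κ L = deriv κ 0 := by
      have hfun : (fun y => κ (y + L)) = κ := funext hper
      have hd := deriv_comp_add_const κ L 0
      rw [hfun] at hd
      simpa using hd.symm
    rw [h1, h2]; ring
  have hI1 : IntervalIntegrable (fun σ => κ σ ^ 5 - 3 * κ σ * deriv κ σ ^ 2)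
      MeasureTheory.volume 0 L := by
    apply Continuous.intervalIntegrable; continuity
  have hI2 : IntervalIntegrable (fun σ => κ σ ^ 3 / 2) MeasureTheory.volume 0 L := by
    apply Continuous.intervalIntegrable; continuity
  have key : (∫ σ in (0:ℝ)..L, (κ σ ^ 5 - 3 * κ σ * deriv κ σ ^ 2)) =
      (1/2) * ∫ σ in (0:ℝ)..L, κ σ ^ 3 := by
    have h0 : (∫ σ in (0:ℝ)..L, (κ σ ^ 3 / 2 - (κ σ ^ 5 - 3 * κ σ * deriv κ σ ^ 2))) = 0 := by
      rw [show (∫ σ in (0:ℝ)..L, (κ σ ^ 3 / 2 - (κ σ ^ 5 - 3 * κ σ * deriv κ σ ^ 2)))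
          = ∫ σ in (0:ℝ)..L, (3 * κ σ * deriv κ σ ^ 2 + κ σ ^ 3 / 2 - κ σ ^ 5) from
        intervalIntegral.integral_congr (fun σ _ => by ring), hint, hperg]
    rw [intervalIntegral.integral_sub hI2 hI1] at h0
    have hhalf : (∫ σ in (0:ℝ)..L, κ σ ^ 3 / 2) = (1/2) * ∫ σ in (0:ℝ)..L, κ σ ^ 3 := by
      rw [← intervalIntegral.integral_const_mul]
      apply intervalIntegral.integral_congr
      intro σ _; ring
    rw [hhalf] at h0
    linarith
  have hpos3 : 0 < ∫ σ in (0:ℝ)..L, κ σ ^ 3 := by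
    apply intervalIntegral.intervalIntegral_pos_of_pos_on
    · apply Continuous.intervalIntegrable; continuity
    · intro x _; exact pow_pos (hpos x) 3
    · exact hL
  constructor
  · rw [key]; ring
  · rw [key]; nlinarith
end

section
/- Let u : ℝ^d → ℝ be a W^{1,2} function with respect to the Gaussian measure ρ = (4π)^{-d/2} e^{-|y|²/4} dy. Then ∫_{ℝ^d} u² |y|² ρ dy ≤ 4 ∫_{ℝ^d} (d u² + 4|∇u|²) ρ dy. -/
/-!
Since `∇ρ = -(y/2) ρ`, integrating `u² ⟪w, y⟫ ρ` by parts along each vector `w` of an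
orthonormal basis and summing gives `∫ u² |y|² ρ = 2 ∫ (2 u ∇u·y + d u²) ρ`. Young's inequality
`2 u ∇u·y ≤ u² |y|² / 4 + 4 |∇u|²` bounds the right-hand side by
`∫ u² |y|² ρ / 2 + 2 ∫ (d u² + 4 |∇u|²) ρ`, and the first term is absorbed into the left-hand side.
-/

open MeasureTheory Real
open scoped RealInnerProductSpace

section NormedSpace

variable {E : Type*} [NormedAddCommGroup E]

noncomputable def gaussWeight (c : ℝ) (y : E) : ℝ := c * exp (-‖y‖ ^ 2 / 4)

lemma gaussWeight_nonneg {c : ℝ} (hc : 0 ≤ c) (y : E) : 0 ≤ gaussWeight c y :=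
  mul_nonneg hc (exp_pos _).le

lemma continuous_gaussWeight (c : ℝ) : Continuous (gaussWeight (E := E) c) := by
  unfold gaussWeight
  fun_prop

lemma abs_two_mul_apply_le [NormedSpace ℝ E] (a : ℝ) (L : E →L[ℝ] ℝ) (v : E) :
    |2 * a * L v| ≤ a ^ 2 * ‖v‖ ^ 2 / 4 + 4 * ‖L‖ ^ 2 :=
  calc |2 * a * L v| = 2 * |a| * |L v| := by rw [abs_mul, abs_mul, abs_two]
    _ ≤ 2 * |a| * (‖L‖ * ‖v‖) := by gcongr; exact L.le_opNorm v
    _ = 2 * (|a| * ‖v‖ / 2) * (2 * ‖L‖) := by ring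
    _ ≤ (|a| * ‖v‖ / 2) ^ 2 + (2 * ‖L‖) ^ 2 := two_mul_le_add_sq _ _
    _ = a ^ 2 * ‖v‖ ^ 2 / 4 + 4 * ‖L‖ ^ 2 := by rw [div_pow, mul_pow, sq_abs]; ring

end NormedSpace

section InnerProductSpace

variable {E : Type*} [NormedAddCommGroup E] [InnerProductSpace ℝ E]

lemma hasLineDerivAt_gaussWeight (c : ℝ) (y w : E) :
    HasLineDerivAt ℝ (gaussWeight c) (-(⟪w, y⟫ / 2) * gaussWeight c y) y w := by
  have h := (((hasFDerivAt_id y).norm_sq.neg.mul_const (4⁻¹ : ℝ)).exp.const_mul c).hasLineDerivAt w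
  convert h using 1
  · ext x; simp [gaussWeight, div_eq_mul_inv]
  · simp [gaussWeight, div_eq_mul_inv, real_inner_comm]
    ring

lemma hasLineDerivAt_sq_mul_inner {u : E → ℝ} {y : E} (hu : DifferentiableAt ℝ u y) {w : E}
    (hw : ‖w‖ = 1) :
    HasLineDerivAt ℝ (fun x => u x ^ 2 * ⟪w, x⟫)
      (2 * u y * fderiv ℝ u y (⟪w, y⟫ • w) + u y ^ 2) y w := by
  have h := ((hu.hasFDerivAt.pow 2).mul (innerSL ℝ w).hasFDerivAt).hasLineDerivAt w
  convert h using 1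
  · rfl
  · simp [hw]
    ring

variable [FiniteDimensional ℝ E] [MeasurableSpace E] [BorelSpace E] {μ : Measure E}
  {u : E → ℝ} {c : ℝ}

lemma integrable_sq_mul_inner_gaussWeight (hu : Continuous u) (hc : 0 ≤ c) {w : E}
    (hw : ‖w‖ = 1)
    (hu2 : Integrable (fun y => u y ^ 2 * gaussWeight c y) μ)
    (hI : Integrable (fun y => u y ^ 2 * ‖y‖ ^ 2 * gaussWeight c y) μ) :
    Integrable (fun y => u y ^ 2 * ⟪w, y⟫ * gaussWeight c y) μ := by
  refine ((hu2.add hI).div_const 2).mono' (by unfold gaussWeight; fun_prop)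
    (ae_of_all _ fun y => ?_)
  have hwy : |⟪w, y⟫| ≤ ‖y‖ := by simpa [hw] using abs_real_inner_le_norm w y
  have hρ := gaussWeight_nonneg hc y
  rw [norm_mul, norm_mul, Real.norm_eq_abs, Real.norm_eq_abs, Real.norm_eq_abs, abs_of_nonneg hρ,
    abs_sq]
  have : |⟪w, y⟫| ≤ (1 + ‖y‖ ^ 2) / 2 := by nlinarith [sq_nonneg (‖y‖ - 1)]
  calc u y ^ 2 * |⟪w, y⟫| * gaussWeight c y
      ≤ u y ^ 2 * ((1 + ‖y‖ ^ 2) / 2) * gaussWeight c y := by gcongr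
    _ = _ := by simp only [Pi.add_apply]; ring

lemma integrable_sq_mul_inner_sq_gaussWeight (hu : Continuous u) (hc : 0 ≤ c) {w : E}
    (hw : ‖w‖ = 1)
    (hI : Integrable (fun y => u y ^ 2 * ‖y‖ ^ 2 * gaussWeight c y) μ) :
    Integrable (fun y => u y ^ 2 * ⟪w, y⟫ ^ 2 * gaussWeight c y) μ := by
  refine hI.mono' (by unfold gaussWeight; fun_prop) (ae_of_all _ fun y => ?_)
  have hwy : ⟪w, y⟫ ^ 2 ≤ ‖y‖ ^ 2 := by
    rw [← sq_abs]; gcongr; simpa [hw] using abs_real_inner_le_norm w y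
  rw [Real.norm_of_nonneg (by have := gaussWeight_nonneg hc y; positivity)]
  gcongr
  exact gaussWeight_nonneg hc y

lemma integrable_two_mul_fderiv_apply_gaussWeight (hu : Continuous u) (hc : 0 ≤ c) {v : E → E}
    (hv : Measurable v) (hvy : ∀ y, ‖v y‖ ≤ ‖y‖)
    (hI : Integrable (fun y => u y ^ 2 * ‖y‖ ^ 2 * gaussWeight c y) μ)
    (hdu2 : Integrable (fun y => ‖fderiv ℝ u y‖ ^ 2 * gaussWeight c y) μ) :
    Integrable (fun y => 2 * u y * fderiv ℝ u y (v y) * gaussWeight c y) μ := by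
  have hmeas : Measurable fun y => fderiv ℝ u y (v y) :=
    isBoundedBilinearMap_apply.continuous.measurable.comp ((measurable_fderiv ℝ u).prodMk hv)
  refine ((hI.div_const 4).add (hdu2.const_mul 4)).mono' ?_ (ae_of_all _ fun y => ?_)
  · exact (((hu.measurable.const_mul 2).mul hmeas).mul
      (continuous_gaussWeight c).measurable).aestronglyMeasurable
  · have hρ := gaussWeight_nonneg hc y
    rw [norm_mul, Real.norm_eq_abs, Real.norm_of_nonneg hρ]
    calc |2 * u y * fderiv ℝ u y (v y)| * gaussWeight c y
        ≤ (u y ^ 2 * ‖v y‖ ^ 2 / 4 + 4 * ‖fderiv ℝ u y‖ ^ 2) * gaussWeight c y := by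
          gcongr; exact abs_two_mul_apply_le _ _ _
      _ ≤ (u y ^ 2 * ‖y‖ ^ 2 / 4 + 4 * ‖fderiv ℝ u y‖ ^ 2) * gaussWeight c y := by
          gcongr; exact hvy y
      _ = _ := by simp only [Pi.add_apply]; ring

lemma integrable_two_mul_fderiv_inner_smul_add_sq_gaussWeight (hu : Differentiable ℝ u)
    (hc : 0 ≤ c) {w : E} (hw : ‖w‖ = 1)
    (hu2 : Integrable (fun y => u y ^ 2 * gaussWeight c y) μ)
    (hdu2 : Integrable (fun y => ‖fderiv ℝ u y‖ ^ 2 * gaussWeight c y) μ)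
    (hI : Integrable (fun y => u y ^ 2 * ‖y‖ ^ 2 * gaussWeight c y) μ) :
    Integrable (fun y => (2 * u y * fderiv ℝ u y (⟪w, y⟫ • w) + u y ^ 2) * gaussWeight c y)
      μ := by
  have h := integrable_two_mul_fderiv_apply_gaussWeight hu.continuous hc
    (v := fun y => ⟪w, y⟫ • w) (by fun_prop) (fun y => ?_) hI hdu2
  · exact (h.add hu2).congr (ae_of_all _ fun y => by simp only [Pi.add_apply]; ring)
  · simpa [norm_smul, hw] using abs_real_inner_le_norm w y

lemma integral_two_mul_fderiv_apply_self_gaussWeight_le (hu : Differentiable ℝ u)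
    (hc : 0 ≤ c)
    (hdu2 : Integrable (fun y => ‖fderiv ℝ u y‖ ^ 2 * gaussWeight c y) μ)
    (hI : Integrable (fun y => u y ^ 2 * ‖y‖ ^ 2 * gaussWeight c y) μ) :
    ∫ y, 2 * u y * fderiv ℝ u y y * gaussWeight c y ∂μ
      ≤ (∫ y, u y ^ 2 * ‖y‖ ^ 2 * gaussWeight c y ∂μ) / 4
        + 4 * ∫ y, ‖fderiv ℝ u y‖ ^ 2 * gaussWeight c y ∂μ := by
  rw [← integral_div, ← integral_const_mul,
    ← integral_add (hI.div_const 4) (hdu2.const_mul 4)]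
  refine integral_mono (integrable_two_mul_fderiv_apply_gaussWeight hu.continuous hc
    (v := fun y => y) measurable_id (fun _ => le_rfl) hI hdu2)
    ((hI.div_const 4).add (hdu2.const_mul 4)) fun y => ?_
  calc 2 * u y * fderiv ℝ u y y * gaussWeight c y
      ≤ (u y ^ 2 * ‖y‖ ^ 2 / 4 + 4 * ‖fderiv ℝ u y‖ ^ 2) * gaussWeight c y := by
        gcongr
        · exact gaussWeight_nonneg hc y
        · exact (le_abs_self _).trans (abs_two_mul_apply_le _ _ _)
    _ = _ := by ring

variable [μ.IsAddHaarMeasure]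

lemma integral_sq_mul_inner_sq_gaussWeight (hu : Differentiable ℝ u) (hc : 0 ≤ c) {w : E}
    (hw : ‖w‖ = 1)
    (hu2 : Integrable (fun y => u y ^ 2 * gaussWeight c y) μ)
    (hdu2 : Integrable (fun y => ‖fderiv ℝ u y‖ ^ 2 * gaussWeight c y) μ)
    (hI : Integrable (fun y => u y ^ 2 * ‖y‖ ^ 2 * gaussWeight c y) μ) :
    ∫ y, u y ^ 2 * ⟪w, y⟫ ^ 2 * gaussWeight c y ∂μ
      = 2 * ∫ y, (2 * u y * fderiv ℝ u y (⟪w, y⟫ • w) + u y ^ 2) * gaussWeight c y ∂μ := by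
  have hfg' : Integrable (fun y => u y ^ 2 * ⟪w, y⟫ * (-(⟪w, y⟫ / 2) * gaussWeight c y)) μ := by
    refine ((integrable_sq_mul_inner_sq_gaussWeight hu.continuous hc hw hI).div_const
      (-2)).congr (ae_of_all _ fun y => ?_)
    ring
  have hibp := integral_bilinear_hasLineDerivAt_right_eq_neg_left_of_integrable
    (B := ContinuousLinearMap.mul ℝ ℝ) (v := w)
    (integrable_two_mul_fderiv_inner_smul_add_sq_gaussWeight hu hc hw hu2 hdu2 hI) hfg'
    (integrable_sq_mul_inner_gaussWeight hu.continuous hc hw hu2 hI)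
    (fun y _ => hasLineDerivAt_sq_mul_inner (hu y) hw)
    (fun y _ => hasLineDerivAt_gaussWeight c y w)
  simp only [ContinuousLinearMap.mul_apply'] at hibp
  have hlhs : ∫ y, u y ^ 2 * ⟪w, y⟫ * (-(⟪w, y⟫ / 2) * gaussWeight c y) ∂μ
      = -(1 / 2) * ∫ y, u y ^ 2 * ⟪w, y⟫ ^ 2 * gaussWeight c y ∂μ := by
    rw [← integral_const_mul]
    congr 1 with y
    ring
  linarith

lemma integral_sq_mul_norm_sq_gaussWeight (hu : Differentiable ℝ u) (hc : 0 ≤ c)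
    (hu2 : Integrable (fun y => u y ^ 2 * gaussWeight c y) μ)
    (hdu2 : Integrable (fun y => ‖fderiv ℝ u y‖ ^ 2 * gaussWeight c y) μ)
    (hI : Integrable (fun y => u y ^ 2 * ‖y‖ ^ 2 * gaussWeight c y) μ) :
    ∫ y, u y ^ 2 * ‖y‖ ^ 2 * gaussWeight c y ∂μ
      = 2 * ∫ y, (2 * u y * fderiv ℝ u y y + Module.finrank ℝ E * u y ^ 2) * gaussWeight c y
        ∂μ := by
  let b := stdOrthonormalBasis ℝ E
  have hb : ∀ i, ‖b i‖ = 1 := b.orthonormal.1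
  calc ∫ y, u y ^ 2 * ‖y‖ ^ 2 * gaussWeight c y ∂μ
      = ∫ y, ∑ i, u y ^ 2 * ⟪b i, y⟫ ^ 2 * gaussWeight c y ∂μ := by
        congr 1 with y
        rw [← b.sum_sq_inner_right y, Finset.mul_sum, Finset.sum_mul]
    _ = ∑ i, 2 * ∫ y, (2 * u y * fderiv ℝ u y (⟪b i, y⟫ • b i) + u y ^ 2) * gaussWeight c y
          ∂μ := by
        rw [integral_finsetSum _ fun i _ =>
          integrable_sq_mul_inner_sq_gaussWeight hu.continuous hc (hb i) hI]
        exact Finset.sum_congr rfl fun i _ =>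
          integral_sq_mul_inner_sq_gaussWeight hu hc (hb i) hu2 hdu2 hI
    _ = 2 * ∫ y, ∑ i, (2 * u y * fderiv ℝ u y (⟪b i, y⟫ • b i) + u y ^ 2) * gaussWeight c y
          ∂μ := by
        rw [← Finset.mul_sum, integral_finsetSum _ fun i _ =>
          integrable_two_mul_fderiv_inner_smul_add_sq_gaussWeight hu hc (hb i) hu2 hdu2 hI]
    _ = 2 * ∫ y, (2 * u y * fderiv ℝ u y y + Module.finrank ℝ E * u y ^ 2) * gaussWeight c y
          ∂μ := by
        congr 2 with y
        rw [← Finset.sum_mul, Finset.sum_add_distrib, ← Finset.mul_sum, ← map_sum, b.sum_repr']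
        simp

theorem integral_sq_mul_norm_sq_gaussWeight_le (hu : Differentiable ℝ u) (hc : 0 ≤ c)
    (hu2 : Integrable (fun y => u y ^ 2 * gaussWeight c y) μ)
    (hdu2 : Integrable (fun y => ‖fderiv ℝ u y‖ ^ 2 * gaussWeight c y) μ) :
    ∫ y, u y ^ 2 * ‖y‖ ^ 2 * gaussWeight c y ∂μ
      ≤ 4 * ∫ y, (Module.finrank ℝ E * u y ^ 2 + 4 * ‖fderiv ℝ u y‖ ^ 2) * gaussWeight c y ∂μ := by
  by_cases hI : Integrable (fun y => u y ^ 2 * ‖y‖ ^ 2 * gaussWeight c y) μ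
  swap
  · -- the Bochner integral of a non-integrable function is `0`
    rw [integral_undef hI]
    have : 0 ≤ ∫ y, (Module.finrank ℝ E * u y ^ 2 + 4 * ‖fderiv ℝ u y‖ ^ 2) * gaussWeight c y ∂μ :=
      integral_nonneg fun y => by have := gaussWeight_nonneg hc y; positivity
    linarith
  have hrhs : ∫ y, (Module.finrank ℝ E * u y ^ 2 + 4 * ‖fderiv ℝ u y‖ ^ 2) * gaussWeight c y ∂μ
      = Module.finrank ℝ E * ∫ y, u y ^ 2 * gaussWeight c y ∂μ
        + 4 * ∫ y, ‖fderiv ℝ u y‖ ^ 2 * gaussWeight c y ∂μ := by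
    rw [← integral_const_mul, ← integral_const_mul,
      ← integral_add (hu2.const_mul _) (hdu2.const_mul _)]
    congr 1 with y
    ring
  have hid : ∫ y, (2 * u y * fderiv ℝ u y y + Module.finrank ℝ E * u y ^ 2) * gaussWeight c y ∂μ
      = ∫ y, 2 * u y * fderiv ℝ u y y * gaussWeight c y ∂μ
        + Module.finrank ℝ E * ∫ y, u y ^ 2 * gaussWeight c y ∂μ := by
    rw [← integral_const_mul, ← integral_add (integrable_two_mul_fderiv_apply_gaussWeight
      hu.continuous hc (v := fun y => y) measurable_id (fun _ => le_rfl) hI hdu2) (hu2.const_mul _)]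
    congr 1 with y
    ring
  have hibp := integral_sq_mul_norm_sq_gaussWeight hu hc hu2 hdu2 hI
  have hyoung := integral_two_mul_fderiv_apply_self_gaussWeight_le hu hc hdu2 hI
  linarith

end InnerProductSpace

/-- Gaussian Poincaré-type inequality exchanging the weight `|y|²` for one derivative:
for `u ∈ W^{1,2}` with respect to the Gaussian `ρ = (4π)^{-d/2} e^{-|y|²/4}`,
`∫ u² |y|² ρ ≤ 4 ∫ (d u² + 4 |∇u|²) ρ`. -/
theorem stmt_5 (d : ℕ) (u : EuclideanSpace ℝ (Fin d) → ℝ)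
    (hu : Differentiable ℝ u)
    (hu2 : Integrable (fun y : EuclideanSpace ℝ (Fin d) =>
      u y ^ 2 * (((4 * π) ^ ((d : ℝ) / 2))⁻¹ * Real.exp (-‖y‖ ^ 2 / 4))))
    (hdu2 : Integrable (fun y : EuclideanSpace ℝ (Fin d) =>
      ‖fderiv ℝ u y‖ ^ 2 * (((4 * π) ^ ((d : ℝ) / 2))⁻¹ * Real.exp (-‖y‖ ^ 2 / 4)))) :
    (∫ y : EuclideanSpace ℝ (Fin d),
        u y ^ 2 * ‖y‖ ^ 2 * (((4 * π) ^ ((d : ℝ) / 2))⁻¹ * Real.exp (-‖y‖ ^ 2 / 4))) ≤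
      4 * ∫ y : EuclideanSpace ℝ (Fin d),
        ((d : ℝ) * u y ^ 2 + 4 * ‖fderiv ℝ u y‖ ^ 2) *
          (((4 * π) ^ ((d : ℝ) / 2))⁻¹ * Real.exp (-‖y‖ ^ 2 / 4)) := by
  have h := integral_sq_mul_norm_sq_gaussWeight_le hu (by positivity) hu2 hdu2
  rwa [finrank_euclideanSpace_fin] at h
end

section
/- Let Γ = Γ̊ × ℝ^{n−k} where Γ̊ ⊂ ℝ^{k+m} is compact, with Gaussian weight ρ = (4π)^{-n/2}e^{-|x|²/4}. There is a constant C = C(n, Γ̊) such that for every u ∈ W^{1,2}(Γ, ρ), ∫_Γ ⟨x⟩² u² ρ ≤ C(∫_Γ u² ρ + ∫_Γ |∇̄u|² ρ), where ∇̄ denotes the gradient in the Euclidean factor ℝ^{n−k} directions. -/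
/-!
In each Euclidean coordinate, `∂ᵢ(yᵢ ρ) = (1 - yᵢ² / 2) ρ` for the Gaussian `ρ`, so integrating
`∂ᵢ(v² yᵢ ρ)` to zero gives `∫ v² ρ - ½ ∫ yᵢ² v² ρ = -2 ∫ yᵢ v ∂ᵢv ρ`. Absorbing the cross term
with `2st ≤ s²/4 + 4t²` yields `∫ yᵢ² v² ρ ≤ 4 ∫ v² ρ + 16 ∫ (∂ᵢv)² ρ`. Summing over `i` and
integrating over the cross-section (Fubini) controls the `|y|²` part of `⟨x⟩²`; the cross-section
part `|x₀|²` is bounded by `D²`.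
-/

open MeasureTheory Real Finset

-- On the cylinder, `ρ (p, y) = gaussianWeight ‖x₀ p‖² (4π)^(-n/2) y`.
noncomputable def gaussianWeight {d : ℕ} (a c : ℝ) (y : Fin d → ℝ) : ℝ :=
  c * exp (-(a + ∑ j, y j ^ 2) / 4)

section Gaussian

variable {d : ℕ} {a c : ℝ}

lemma gaussianWeight_nonneg (hc : 0 ≤ c) (y : Fin d → ℝ) : 0 ≤ gaussianWeight a c y :=
  mul_nonneg hc (exp_pos _).le

lemma continuous_gaussianWeight : Continuous (gaussianWeight (d := d) a c) := by
  unfold gaussianWeight; fun_prop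

lemma hasLineDerivAt_coord_mul_gaussianWeight (i : Fin d) (y : Fin d → ℝ) :
    HasLineDerivAt ℝ (fun y => y i * gaussianWeight a c y)
      ((1 - y i ^ 2 / 2) * gaussianWeight a c y) y (Pi.single i 1) := by
  have hp : ∀ j, HasFDerivAt (fun y : Fin d → ℝ => y j)
      (ContinuousLinearMap.proj (R := ℝ) j) y := fun j => hasFDerivAt_apply j y
  have hq := HasFDerivAt.fun_sum (u := univ) (A := fun j (y : Fin d → ℝ) => y j ^ 2)
    fun j _ => (hp j).pow 2
  convert ((hp i).mul (((hq.const_add a).neg.mul_const (1 / 4 : ℝ)).exp.const_mul c)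
    ).hasLineDerivAt (Pi.single i 1) using 1
  -- the first two goals identify the two module structures on `Fin d → ℝ`
  · rfl
  · rfl
  · funext z; simp only [gaussianWeight, Pi.mul_apply, Pi.neg_apply]; ring_nf
  · simp [gaussianWeight, Pi.single_apply]
    ring_nf

lemma integral_coord_sq_mul_gaussianWeight_le (hc : 0 ≤ c) (i : Fin d)
    {v : (Fin d → ℝ) → ℝ} (hv : Differentiable ℝ v)
    (h1 : Integrable fun y => v y ^ 2 * gaussianWeight a c y)
    (h2 : Integrable fun y => fderiv ℝ v y (Pi.single i 1) ^ 2 * gaussianWeight a c y)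
    (h3 : Integrable fun y => y i ^ 2 * (v y ^ 2 * gaussianWeight a c y)) :
    ∫ y, y i ^ 2 * (v y ^ 2 * gaussianWeight a c y) ≤
      4 * (∫ y, v y ^ 2 * gaussianWeight a c y) +
        16 * ∫ y, fderiv ℝ v y (Pi.single i 1) ^ 2 * gaussianWeight a c y := by
  set W := gaussianWeight (d := d) a c
  set e : Fin d → ℝ := Pi.single i 1
  have hW : ∀ y, 0 ≤ W y := gaussianWeight_nonneg hc
  have hvc : Continuous v := hv.continuous
  have hWc : Continuous W := continuous_gaussianWeight
  have hmeas : Measurable fun y => y i * v y * fderiv ℝ v y e * W y := by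
    have := measurable_fderiv_apply_const ℝ v e
    fun_prop
  have hcross : Integrable fun y => y i * v y * fderiv ℝ v y e * W y := by
    refine (h3.add h2).mono' hmeas.aestronglyMeasurable (.of_forall fun y => ?_)
    rw [Pi.add_apply, Real.norm_eq_abs, abs_le]
    constructor <;> nlinarith [mul_nonneg (hW y) (sq_nonneg (y i * v y - fderiv ℝ v y e)),
      mul_nonneg (hW y) (sq_nonneg (y i * v y + fderiv ℝ v y e))]
  have hsq : Integrable fun y => v y ^ 2 * (y i * W y) := by
    refine (h1.add h3).mono' (by fun_prop) (.of_forall fun y => ?_)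
    rw [Pi.add_apply, Real.norm_eq_abs, abs_le]
    have hv2W := mul_nonneg (hW y) (sq_nonneg (v y))
    constructor <;> nlinarith [mul_nonneg hv2W (sq_nonneg (y i - 1)),
      mul_nonneg hv2W (sq_nonneg (y i + 1))]
  have ibp : ∫ y, v y ^ 2 * ((1 - y i ^ 2 / 2) * W y) =
      -∫ y, (2 * v y * fderiv ℝ v y e) * (y i * W y) :=
    integral_bilinear_hasLineDerivAt_right_eq_neg_left_of_integrable
      (B := ContinuousLinearMap.mul ℝ ℝ)
      ((hcross.const_mul 2).congr (.of_forall fun y => by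
        simp only [ContinuousLinearMap.mul_apply']; ring))
      ((h1.sub (h3.const_mul (1 / 2))).congr (.of_forall fun y => by
        simp only [Pi.sub_apply, ContinuousLinearMap.mul_apply']; ring))
      hsq
      (fun y _ => ((hv y).hasFDerivAt.pow 2).hasLineDerivAt e |>.congr_deriv (by simp))
      (fun y _ => hasLineDerivAt_coord_mul_gaussianWeight i y)
  have lhs : ∫ y, v y ^ 2 * ((1 - y i ^ 2 / 2) * W y) =
      (∫ y, v y ^ 2 * W y) - 1 / 2 * ∫ y, y i ^ 2 * (v y ^ 2 * W y) := by
    rw [← integral_const_mul, ← integral_sub h1 (h3.const_mul _)]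
    exact integral_congr_ae (.of_forall fun y => by simp only; ring)
  have rhs : ∫ y, (2 * v y * fderiv ℝ v y e) * (y i * W y) =
      2 * ∫ y, y i * v y * fderiv ℝ v y e * W y := by
    rw [← integral_const_mul]
    exact integral_congr_ae (.of_forall fun y => by simp only; ring)
  have amgm : 2 * ∫ y, y i * v y * fderiv ℝ v y e * W y ≤
      1 / 4 * (∫ y, y i ^ 2 * (v y ^ 2 * W y)) + 4 * ∫ y, fderiv ℝ v y e ^ 2 * W y := by
    rw [← integral_const_mul, ← integral_const_mul, ← integral_const_mul,
      ← integral_add (h3.const_mul _) (h2.const_mul _)]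
    refine integral_mono (hcross.const_mul 2) ((h3.const_mul _).add (h2.const_mul _))
      fun y => ?_
    nlinarith [mul_nonneg (hW y) (sq_nonneg (y i * v y / 2 - 2 * fderiv ℝ v y e))]
  linarith

lemma sq_apply_single_le_sq_opNorm (L : (Fin d → ℝ) →L[ℝ] ℝ) (i : Fin d) :
    L (Pi.single i 1) ^ 2 ≤ ‖L‖ ^ 2 := by
  have h := L.le_opNorm (Pi.single i 1)
  rw [Pi.norm_single, norm_one, mul_one, Real.norm_eq_abs] at h
  exact sq_le_sq' (abs_le.1 h).1 (abs_le.1 h).2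

lemma integral_sum_sq_mul_gaussianWeight_le (hc : 0 ≤ c)
    {v : (Fin d → ℝ) → ℝ} (hv : Differentiable ℝ v)
    (h1 : Integrable fun y => v y ^ 2 * gaussianWeight a c y)
    (h2 : Integrable fun y => ‖fderiv ℝ v y‖ ^ 2 * gaussianWeight a c y)
    (h3 : Integrable fun y => (∑ j, y j ^ 2) * (v y ^ 2 * gaussianWeight a c y)) :
    ∫ y, (∑ j, y j ^ 2) * (v y ^ 2 * gaussianWeight a c y) ≤
      d * (4 * (∫ y, v y ^ 2 * gaussianWeight a c y) +
        16 * ∫ y, ‖fderiv ℝ v y‖ ^ 2 * gaussianWeight a c y) := by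
  set W := gaussianWeight (d := d) a c
  have hW : ∀ y, 0 ≤ W y := gaussianWeight_nonneg hc
  have hvc : Continuous v := hv.continuous
  have hWc : Continuous W := continuous_gaussianWeight
  have hcoord : ∀ i, Integrable fun y => y i ^ 2 * (v y ^ 2 * W y) := fun i => by
    refine h3.mono' (by fun_prop) (.of_forall fun y => ?_)
    rw [Real.norm_of_nonneg (by positivity [hW y])]
    exact mul_le_mul_of_nonneg_right
      (single_le_sum (f := fun j => y j ^ 2) (fun j _ => sq_nonneg _) (mem_univ i))
      (by positivity [hW y])
  have hpartial : ∀ i : Fin d, Integrable fun y => fderiv ℝ v y (Pi.single i 1) ^ 2 * W y :=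
    fun i => by
    have := measurable_fderiv_apply_const ℝ v (Pi.single i 1 : Fin d → ℝ)
    refine h2.mono' (by fun_prop) (.of_forall fun y => ?_)
    rw [Real.norm_of_nonneg (by positivity [hW y])]
    exact mul_le_mul_of_nonneg_right (sq_apply_single_le_sq_opNorm _ i) (hW y)
  calc ∫ y, (∑ j, y j ^ 2) * (v y ^ 2 * W y)
      = ∑ i, ∫ y, y i ^ 2 * (v y ^ 2 * W y) := by
        simp_rw [sum_mul]
        exact integral_finsetSum _ fun i _ => hcoord i
    _ ≤ ∑ _i : Fin d, (4 * (∫ y, v y ^ 2 * W y) + 16 * ∫ y, ‖fderiv ℝ v y‖ ^ 2 * W y) := by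
        refine sum_le_sum fun i _ => (integral_coord_sq_mul_gaussianWeight_le hc i hv h1
          (hpartial i) (hcoord i)).trans ?_
        gcongr 4 * _ + 16 * ?_
        exact integral_mono (hpartial i) h2 fun y =>
          mul_le_mul_of_nonneg_right (sq_apply_single_le_sq_opNorm _ i) (hW y)
    _ = _ := by rw [sum_const, card_univ, Fintype.card_fin, nsmul_eq_mul]

end Gaussian

theorem integral_prod_sum_sq_mul_gaussianWeight_le {P : Type*} [MeasurableSpace P]
    {μ : Measure P} [SFinite μ] {d : ℕ} {a : P → ℝ} {c : ℝ} (hc : 0 ≤ c)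
    {u : P × (Fin d → ℝ) → ℝ} (hu : ∀ p, Differentiable ℝ fun y => u (p, y))
    (h1 : Integrable (fun z => u z ^ 2 * gaussianWeight (a z.1) c z.2) (μ.prod volume))
    (h2 : Integrable (fun z => ‖fderiv ℝ (fun y => u (z.1, y)) z.2‖ ^ 2 *
      gaussianWeight (a z.1) c z.2) (μ.prod volume))
    (h3 : Integrable (fun z : P × (Fin d → ℝ) =>
      (∑ j, z.2 j ^ 2) * (u z ^ 2 * gaussianWeight (a z.1) c z.2)) (μ.prod volume)) :
    ∫ z : P × (Fin d → ℝ), (∑ j, z.2 j ^ 2) * (u z ^ 2 * gaussianWeight (a z.1) c z.2)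
        ∂μ.prod volume ≤
      d * (4 * (∫ z, u z ^ 2 * gaussianWeight (a z.1) c z.2 ∂μ.prod volume) +
        16 * ∫ z, ‖fderiv ℝ (fun y => u (z.1, y)) z.2‖ ^ 2 * gaussianWeight (a z.1) c z.2
          ∂μ.prod volume) := by
  have h1' := h1.integral_prod_left.const_mul 4
  have h2' := h2.integral_prod_left.const_mul 16
  rw [integral_prod _ h1, integral_prod _ h2, integral_prod _ h3, ← integral_const_mul,
    ← integral_const_mul, ← integral_add h1' h2', ← integral_const_mul]
  refine integral_mono_ae h3.integral_prod_left ((h1'.add h2').const_mul _) ?_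
  filter_upwards [h1.prod_right_ae, h2.prod_right_ae, h3.prod_right_ae] with p hp1 hp2 hp3
  exact integral_sum_sq_mul_gaussianWeight_le hc (hu p) hp1 hp2 hp3

theorem integral_prod_one_add_mul_sq_mul_gaussianWeight_le {P : Type*} [MeasurableSpace P]
    {μ : Measure P} [SFinite μ] {d : ℕ} {a : P → ℝ} {A c : ℝ} (ha₀ : ∀ p, 0 ≤ a p)
    (ha : ∀ p, a p ≤ A) (hA : 0 ≤ A) (hc : 0 ≤ c) {u : P × (Fin d → ℝ) → ℝ}
    (hu : ∀ p, Differentiable ℝ fun y => u (p, y))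
    (h1 : Integrable (fun z => u z ^ 2 * gaussianWeight (a z.1) c z.2) (μ.prod volume))
    (h2 : Integrable (fun z => ‖fderiv ℝ (fun y => u (z.1, y)) z.2‖ ^ 2 *
      gaussianWeight (a z.1) c z.2) (μ.prod volume)) :
    ∫ z : P × (Fin d → ℝ), (1 + a z.1 + ∑ j, z.2 j ^ 2) * u z ^ 2 *
        gaussianWeight (a z.1) c z.2 ∂μ.prod volume ≤
      (1 + A + 16 * d) * ((∫ z, u z ^ 2 * gaussianWeight (a z.1) c z.2 ∂μ.prod volume) +
        ∫ z, ‖fderiv ℝ (fun y => u (z.1, y)) z.2‖ ^ 2 * gaussianWeight (a z.1) c z.2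
          ∂μ.prod volume) := by
  set I₁ := ∫ z, u z ^ 2 * gaussianWeight (a z.1) c z.2 ∂μ.prod volume
  set I₂ := ∫ z, ‖fderiv ℝ (fun y => u (z.1, y)) z.2‖ ^ 2 * gaussianWeight (a z.1) c z.2
    ∂μ.prod volume
  have hW : ∀ z : P × (Fin d → ℝ), 0 ≤ gaussianWeight (a z.1) c z.2 :=
    fun z => gaussianWeight_nonneg hc z.2
  have hI₁ : 0 ≤ I₁ := integral_nonneg fun z => mul_nonneg (sq_nonneg _) (hW z)
  have hI₂ : 0 ≤ I₂ := integral_nonneg fun z => mul_nonneg (sq_nonneg _) (hW z)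
  by_cases hint : Integrable (fun z : P × (Fin d → ℝ) => (1 + a z.1 + ∑ j, z.2 j ^ 2) *
    u z ^ 2 * gaussianWeight (a z.1) c z.2) (μ.prod volume)
  swap
  · -- a non-integrable left-hand side has integral `0`
    rw [integral_undef hint]
    positivity
  have hY : Integrable (fun z : P × (Fin d → ℝ) =>
      (∑ j, z.2 j ^ 2) * (u z ^ 2 * gaussianWeight (a z.1) c z.2)) (μ.prod volume) := by
    refine hint.mono' ((by fun_prop : Measurable fun z : P × (Fin d → ℝ) =>
      ∑ j, z.2 j ^ 2).aestronglyMeasurable.mul h1.aestronglyMeasurable) (.of_forall fun z => ?_)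
    have hs : 0 ≤ ∑ j, z.2 j ^ 2 := sum_nonneg fun j _ => sq_nonneg _
    rw [Real.norm_of_nonneg (by positivity [hW z])]
    nlinarith [mul_nonneg (sq_nonneg (u z)) (hW z), ha₀ z.1]
  calc ∫ z : P × (Fin d → ℝ), (1 + a z.1 + ∑ j, z.2 j ^ 2) * u z ^ 2 *
        gaussianWeight (a z.1) c z.2 ∂μ.prod volume
      ≤ ∫ z : P × (Fin d → ℝ), ((1 + A) * (u z ^ 2 * gaussianWeight (a z.1) c z.2) +
          (∑ j, z.2 j ^ 2) * (u z ^ 2 * gaussianWeight (a z.1) c z.2)) ∂μ.prod volume :=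
        integral_mono hint ((h1.const_mul _).add hY) fun z => by
          nlinarith [mul_nonneg (sq_nonneg (u z)) (hW z), ha z.1]
    _ = (1 + A) * I₁ + ∫ z : P × (Fin d → ℝ),
          (∑ j, z.2 j ^ 2) * (u z ^ 2 * gaussianWeight (a z.1) c z.2) ∂μ.prod volume := by
        rw [integral_add (h1.const_mul _) hY, integral_const_mul]
    _ ≤ (1 + A) * I₁ + d * (4 * I₁ + 16 * I₂) := by
        gcongr
        exact integral_prod_sum_sq_mul_gaussianWeight_le hc hu h1 h2 hY
    _ ≤ (1 + A + 16 * d) * (I₁ + I₂) := by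
        have hd : (0 : ℝ) ≤ d := d.cast_nonneg
        nlinarith [mul_nonneg hd hI₁, mul_nonneg hA hI₂]

/-- The cross-section `Γ̊` is encoded as a finite measure space `P` with a bounded position map
`x₀ : P → ℝ^{k+m}`; `∇̄u` is the derivative of `u` in the `Fin d → ℝ` variable. -/
theorem stmt_13_general (n k m d : ℕ)
    (P : Type*) [MeasureSpace P] [IsFiniteMeasure (volume : Measure P)]
    (x₀ : P → EuclideanSpace ℝ (Fin (k + m))) (D : ℝ) (hD : ∀ p, ‖x₀ p‖ ≤ D) :
    ∃ C : ℝ, 0 < C ∧ ∀ u : P × (Fin d → ℝ) → ℝ,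
      (∀ p, Differentiable ℝ (fun y => u (p, y))) →
      Integrable (fun z : P × (Fin d → ℝ) => u z ^ 2 *
          (((4 * π) ^ ((n : ℝ) / 2))⁻¹ *
            Real.exp (-(‖x₀ z.1‖ ^ 2 + ∑ i, z.2 i ^ 2) / 4)))
        ((volume : Measure P).prod (volume : Measure (Fin d → ℝ))) →
      Integrable (fun z : P × (Fin d → ℝ) =>
          ‖fderiv ℝ (fun y => u (z.1, y)) z.2‖ ^ 2 *
          (((4 * π) ^ ((n : ℝ) / 2))⁻¹ *
            Real.exp (-(‖x₀ z.1‖ ^ 2 + ∑ i, z.2 i ^ 2) / 4)))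
        ((volume : Measure P).prod (volume : Measure (Fin d → ℝ))) →
      (∫ z : P × (Fin d → ℝ),
          (1 + ‖x₀ z.1‖ ^ 2 + ∑ i, z.2 i ^ 2) * u z ^ 2 *
            (((4 * π) ^ ((n : ℝ) / 2))⁻¹ *
              Real.exp (-(‖x₀ z.1‖ ^ 2 + ∑ i, z.2 i ^ 2) / 4))
          ∂((volume : Measure P).prod (volume : Measure (Fin d → ℝ)))) ≤
        C * ((∫ z : P × (Fin d → ℝ),
            u z ^ 2 * (((4 * π) ^ ((n : ℝ) / 2))⁻¹ *
              Real.exp (-(‖x₀ z.1‖ ^ 2 + ∑ i, z.2 i ^ 2) / 4))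
            ∂((volume : Measure P).prod (volume : Measure (Fin d → ℝ)))) +
          ∫ z : P × (Fin d → ℝ),
            ‖fderiv ℝ (fun y => u (z.1, y)) z.2‖ ^ 2 *
              (((4 * π) ^ ((n : ℝ) / 2))⁻¹ *
                Real.exp (-(‖x₀ z.1‖ ^ 2 + ∑ i, z.2 i ^ 2) / 4))
            ∂((volume : Measure P).prod (volume : Measure (Fin d → ℝ)))) := by
  refine ⟨1 + D ^ 2 + 16 * d, by positivity, fun u hu h1 h2 => ?_⟩
  exact integral_prod_one_add_mul_sq_mul_gaussianWeight_le (a := fun p => ‖x₀ p‖ ^ 2)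
    (fun p => sq_nonneg _) (fun p => pow_le_pow_left₀ (norm_nonneg _) (hD p) 2) (sq_nonneg D)
    (by positivity) hu h1 h2

/-- Gaussian Poincaré inequality on a cylinder `Γ = Γ̊ × ℝ^{n-k}`: the cross-section `Γ̊`
is encoded as a finite measure space `P` with a bounded position map `x₀ : P → ℝ^{k+m}`,
and the Gaussian weight is `ρ = (4π)^{-n/2} e^{-(|x₀(p)|² + |y|²)/4}`. There is
`C = C(n, Γ̊)` such that for every `u ∈ W^{1,2}(Γ, ρ)`,
`∫ ⟨x⟩² u² ρ ≤ C (∫ u² ρ + ∫ |∇̄u|² ρ)`, where `∇̄` differentiates only in the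
Euclidean factor directions. -/
theorem stmt_13 (n k m d : ℕ) (hd : d = n - k)
    (P : Type*) [MeasureSpace P] [IsFiniteMeasure (volume : Measure P)]
    (x₀ : P → EuclideanSpace ℝ (Fin (k + m))) (D : ℝ) (hD : ∀ p, ‖x₀ p‖ ≤ D) :
    ∃ C : ℝ, 0 < C ∧ ∀ u : P × (Fin d → ℝ) → ℝ,
      (∀ p, Differentiable ℝ (fun y => u (p, y))) →
      Integrable (fun z : P × (Fin d → ℝ) => u z ^ 2 *
          (((4 * π) ^ ((n : ℝ) / 2))⁻¹ *
            Real.exp (-(‖x₀ z.1‖ ^ 2 + ∑ i, z.2 i ^ 2) / 4)))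
        ((volume : Measure P).prod (volume : Measure (Fin d → ℝ))) →
      Integrable (fun z : P × (Fin d → ℝ) =>
          ‖fderiv ℝ (fun y => u (z.1, y)) z.2‖ ^ 2 *
          (((4 * π) ^ ((n : ℝ) / 2))⁻¹ *
            Real.exp (-(‖x₀ z.1‖ ^ 2 + ∑ i, z.2 i ^ 2) / 4)))
        ((volume : Measure P).prod (volume : Measure (Fin d → ℝ))) →
      (∫ z : P × (Fin d → ℝ),
          (1 + ‖x₀ z.1‖ ^ 2 + ∑ i, z.2 i ^ 2) * u z ^ 2 *
            (((4 * π) ^ ((n : ℝ) / 2))⁻¹ *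
              Real.exp (-(‖x₀ z.1‖ ^ 2 + ∑ i, z.2 i ^ 2) / 4))
          ∂((volume : Measure P).prod (volume : Measure (Fin d → ℝ)))) ≤
        C * ((∫ z : P × (Fin d → ℝ),
            u z ^ 2 * (((4 * π) ^ ((n : ℝ) / 2))⁻¹ *
              Real.exp (-(‖x₀ z.1‖ ^ 2 + ∑ i, z.2 i ^ 2) / 4))
            ∂((volume : Measure P).prod (volume : Measure (Fin d → ℝ)))) +
          ∫ z : P × (Fin d → ℝ),
            ‖fderiv ℝ (fun y => u (z.1, y)) z.2‖ ^ 2 *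
              (((4 * π) ^ ((n : ℝ) / 2))⁻¹ *
                Real.exp (-(‖x₀ z.1‖ ^ 2 + ∑ i, z.2 i ^ 2) / 4))
            ∂((volume : Measure P).prod (volume : Measure (Fin d → ℝ)))) :=
  stmt_13_general n k m d P x₀ D hD
end
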